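/- Let T̂* ⊆ {1,…,p} with ŝ* = |T̂*|, and let η̃ ∈ ℝ^p satisfy η̃_j = 0 for all j ∉ T̂* (for instance, the post-model-selection logistic estimator that minimizes Λ over vectors supported on T̂*). Let φ > 0 satisfy φ·‖δ‖² ≤ ‖√w_i·x_i'δ‖²_{2,n} for every δ ∈ ℝ^p with ‖δ‖₀ ≤ ŝ* + s, and let q̄ > 0 satisfy q̄·(1/n)∑_{i=1}^n w_i·|x_i'δ|³ ≤ ((1/n)∑_{i=1}^n w_i·(x_i'δ)²)^{3/2} for every δ with ‖δ‖₀ ≤ ŝ* + s. Let ε ≥ 0 be such that Λ(η̃) − Λ(η₀) ≤ ε². If q̄ > 6·√(ŝ* + s)·‖∇Λ(η₀)‖_∞/√φ and q̄ > 6·ε, then ‖√w_i·x_i'(η̃ − η₀)‖_{2,n} ≤ √3·ε + 3·√(ŝ* + s)·‖∇Λ(η₀)‖_∞/√φ. -/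

import Mathlib

open Finset

/-- The logistic link function `G(t) = exp t / (1 + exp t)`. -/
noncomputable def logistic (t : ℝ) : ℝ := Real.exp t / (1 + Real.exp t)

/-- Inner product `x_i'η` of the `i`-th design vector with `η`. -/
def xdot {n p : ℕ} (x : Fin n → Fin p → ℝ) (η : Fin p → ℝ) (i : Fin n) : ℝ :=
  ∑ j, x i j * η j

/-- Average logistic negative log-likelihood
`Λ(η) = (1/n)∑ᵢ [log(1+exp(x_i'η)) − y_i·(x_i'η)]`. -/
noncomputable def Lam {n p : ℕ} (x : Fin n → Fin p → ℝ) (y : Fin n → ℝ)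
    (η : Fin p → ℝ) : ℝ :=
  (1 / (n : ℝ)) * ∑ i, (Real.log (1 + Real.exp (xdot x η i)) - y i * xdot x η i)

/-- Gradient of `Λ`: `∇Λ(η) = (1/n)∑ᵢ (G(x_i'η) − y_i)·x_i`. -/
noncomputable def gradLam {n p : ℕ} (x : Fin n → Fin p → ℝ) (y : Fin n → ℝ)
    (η : Fin p → ℝ) (j : Fin p) : ℝ :=
  (1 / (n : ℝ)) * ∑ i, (logistic (xdot x η i) - y i) * x i j

/-- Sup-norm `‖∇Λ(η)‖_∞` of the gradient of `Λ`. -/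
noncomputable def gradLamSup {n p : ℕ} (x : Fin n → Fin p → ℝ) (y : Fin n → ℝ)
    (η : Fin p → ℝ) : ℝ :=
  ⨆ j : Fin p, |gradLam x y η j|

/-- The logistic weights `w_i = G(x_i'η₀)·(1 − G(x_i'η₀))`. -/
noncomputable def wgt {n p : ℕ} (x : Fin n → Fin p → ℝ) (η₀ : Fin p → ℝ) (i : Fin n) : ℝ :=
  logistic (xdot x η₀ i) * (1 - logistic (xdot x η₀ i))

/-- Weighted prediction norm `‖√w_i·x_i'δ‖_{2,n} = ((1/n)∑ᵢ w_i (x_i'δ)²)^{1/2}`. -/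
noncomputable def predNorm {n p : ℕ} (x : Fin n → Fin p → ℝ) (w : Fin n → ℝ)
    (δ : Fin p → ℝ) : ℝ :=
  Real.sqrt ((1 / (n : ℝ)) * ∑ i, w i * xdot x δ i ^ 2)

/-- Support of a coefficient vector. -/
noncomputable def supp {p : ℕ} (η : Fin p → ℝ) : Finset (Fin p) :=
  Finset.univ.filter (fun j => η j ≠ 0)

/-- ℓ1 norm of a vector in `ℝ^p`. -/
def l1norm {p : ℕ} (δ : Fin p → ℝ) : ℝ := ∑ j, |δ j|

/-- The restricted cone `Δ_c̄ = {δ : ‖δ_{T^c}‖₁ ≤ c̄·‖δ_T‖₁}` for a support set `T`. -/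
noncomputable def inCone {p : ℕ} (T : Finset (Fin p)) (cbar : ℝ) (δ : Fin p → ℝ) : Prop :=
  ∑ j ∈ Tᶜ, |δ j| ≤ cbar * ∑ j ∈ T, |δ j|

/-!
The logistic loss is self-concordant: the weight `w(t) = G(t)(1 - G(t))` satisfies
`e^{-|h|} w(a) ≤ w(a + h)`, so a Taylor expansion of `Λ` around `η₀` gives
`Λ(η₀ + δ) - Λ(η₀) ≥ ∇Λ(η₀)'δ + ‖δ‖²/2 - (1/6)(1/n)∑ wᵢ |xᵢ'δ|³`, with `‖·‖` the weighted
prediction norm. For `δ` supported on `T̂* ∪ T`, the sparse eigenvalue `φ` bounds the gradient term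
by `A‖δ‖` with `A = √(ŝ* + s) ‖∇Λ(η₀)‖_∞ / √φ`, and `q̄` bounds the cubic term by `‖δ‖³/(6q̄)`.
By convexity every point `η₀ + c(η̃ - η₀)`, `c ∈ [0, 1]`, has excess loss at most `ε²`, so
`-Au + u²/2 - u³/(6q̄) ≤ ε²` for all `u ∈ [0, ‖η̃ - η₀‖]`. At `u = min(‖η̃ - η₀‖, 4q̄/5)` the cubic
term is at most `2u²/15`, and this forces `‖η̃ - η₀‖ ≤ √3 ε + 3A`.
-/

open Real

lemma logistic_eq_sigmoid : logistic = sigmoid := by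
  funext t
  unfold logistic
  rw [sigmoid_def, exp_neg]
  field_simp
  ring

lemma sigmoid_mul_one_sub_sigmoid (t : ℝ) :
    sigmoid t * (1 - sigmoid t) = (2 + exp t + exp (-t))⁻¹ := by
  rw [← sigmoid_neg, sigmoid_def, sigmoid_def, neg_neg, ← mul_inv]
  congr 1
  rw [add_mul, mul_add, mul_add, ← exp_add, neg_add_cancel, exp_zero]
  ring

lemma exp_neg_abs_mul_le_sigmoid_mul_one_sub_sigmoid (a h : ℝ) :
    exp (-|h|) * (sigmoid a * (1 - sigmoid a)) ≤ sigmoid (a + h) * (1 - sigmoid (a + h)) := by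
  rw [sigmoid_mul_one_sub_sigmoid, sigmoid_mul_one_sub_sigmoid, ← div_eq_mul_inv,
    div_le_iff₀ (by positivity), ← div_eq_inv_mul, le_div_iff₀ (by positivity)]
  have h1 : 1 ≤ exp |h| := one_le_exp (abs_nonneg h)
  have h2 : exp (a + h) ≤ exp a * exp |h| := by
    rw [← exp_add]; exact exp_le_exp.2 (by linarith [le_abs_self h])
  have h3 : exp (-(a + h)) ≤ exp (-a) * exp |h| := by
    rw [← exp_add]; exact exp_le_exp.2 (by linarith [neg_le_abs h])
  calc exp (-|h|) * (2 + exp (a + h) + exp (-(a + h)))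
      ≤ exp (-|h|) * (exp |h| * (2 + exp a + exp (-a))) := by
        gcongr; nlinarith [exp_pos a, exp_pos (-a)]
    _ = 2 + exp a + exp (-a) := by rw [← mul_assoc, ← exp_add, neg_add_cancel, exp_zero, one_mul]

lemma nonneg_of_hasDerivAt_nonneg {f f' : ℝ → ℝ} (hf : ∀ t, HasDerivAt f (f' t) t)
    (hf' : ∀ t, 0 ≤ t → 0 ≤ f' t) (h0 : f 0 = 0) {t : ℝ} (ht : 0 ≤ t) : 0 ≤ f t := by
  have hmono : MonotoneOn f (Set.Ici 0) :=
    monotoneOn_of_hasDerivWithinAt_nonneg (convex_Ici 0)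
      (fun s _ => (hf s).continuousAt.continuousWithinAt)
      (fun s _ => (hf s).hasDerivWithinAt)
      (fun s hs => hf' s (interior_subset hs))
  simpa [h0] using hmono Set.self_mem_Ici ht ht

noncomputable def softplus (t : ℝ) : ℝ := log (1 + exp t)

lemma hasDerivAt_softplus (t : ℝ) : HasDerivAt softplus (sigmoid t) t := by
  have h : HasDerivAt (fun s => log (1 + exp s)) (logistic t) t :=
    ((hasDerivAt_exp t).const_add 1).log (by positivity)
  rwa [logistic_eq_sigmoid] at h

lemma softplus_neg (t : ℝ) : softplus (-t) = softplus t - t := by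
  rw [softplus, softplus, eq_sub_iff_add_eq, ← log_exp t, ← log_mul (by positivity) (by positivity),
    log_exp, add_mul, one_mul, ← exp_add, neg_add_cancel, exp_zero, add_comm]

lemma convexOn_softplus : ConvexOn ℝ Set.univ softplus :=
  convexOn_of_hasDerivWithinAt2_nonneg convex_univ
    (fun t _ => (hasDerivAt_softplus t).continuousAt.continuousWithinAt)
    (fun t _ => (hasDerivAt_softplus t).hasDerivWithinAt)
    (fun t _ => (hasDerivAt_sigmoid t).hasDerivWithinAt)
    (fun t _ => mul_nonneg (sigmoid_nonneg t) (sub_nonneg.2 (sigmoid_le_one t)))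

lemma hasDerivAt_sq_div_two (t : ℝ) : HasDerivAt (fun s : ℝ => s ^ 2 / 2) t t := by
  simpa using (hasDerivAt_pow 2 t).div_const 2

lemma hasDerivAt_cube_div_six (t : ℝ) : HasDerivAt (fun s : ℝ => s ^ 3 / 6) (t ^ 2 / 2) t :=
  ((hasDerivAt_pow 3 t).div_const 6).congr_deriv (by norm_num; ring)

lemma softplus_sub_ge_of_nonneg (a : ℝ) {h : ℝ} (hh : 0 ≤ h) :
    sigmoid a * (1 - sigmoid a) * (h ^ 2 / 2 - h ^ 3 / 6)
      ≤ softplus (a + h) - softplus a - sigmoid a * h := by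
  set w := sigmoid a * (1 - sigmoid a)
  have hdσ : ∀ t, HasDerivAt (fun s => sigmoid (a + s) - sigmoid a - w * (s - s ^ 2 / 2))
      (sigmoid (a + t) * (1 - sigmoid (a + t)) - w * (1 - t)) t := fun t =>
    (((hasDerivAt_sigmoid (a + t)).comp_const_add a t).sub_const _).sub
      (((hasDerivAt_id' t).sub (hasDerivAt_sq_div_two t)).const_mul w)
  have hσ : ∀ t, 0 ≤ t → 0 ≤ sigmoid (a + t) - sigmoid a - w * (t - t ^ 2 / 2) := by
    refine fun t ht => nonneg_of_hasDerivAt_nonneg hdσ (fun s hs => ?_) (by simp) ht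
    have := exp_neg_abs_mul_le_sigmoid_mul_one_sub_sigmoid a s
    rw [abs_of_nonneg hs] at this
    nlinarith [add_one_le_exp (-s), mul_nonneg (sigmoid_nonneg a) (sub_nonneg.2 (sigmoid_le_one a))]
  have hdL : ∀ t, HasDerivAt
      (fun s => softplus (a + s) - softplus a - sigmoid a * s - w * (s ^ 2 / 2 - s ^ 3 / 6))
      (sigmoid (a + t) - sigmoid a - w * (t - t ^ 2 / 2)) t := fun t =>
    (((((hasDerivAt_softplus (a + t)).comp_const_add a t).sub_const (softplus a)).sub
      ((hasDerivAt_id' t).const_mul (sigmoid a))).sub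
      (((hasDerivAt_sq_div_two t).sub (hasDerivAt_cube_div_six t)).const_mul w)).congr_deriv
      (by ring)
  have := nonneg_of_hasDerivAt_nonneg hdL hσ (by simp) hh
  linarith

lemma softplus_sub_ge (a h : ℝ) :
    sigmoid a * (1 - sigmoid a) * (h ^ 2 / 2 - |h| ^ 3 / 6)
      ≤ softplus (a + h) - softplus a - sigmoid a * h := by
  rcases le_total 0 h with hh | hh
  · simpa only [abs_of_nonneg hh] using softplus_sub_ge_of_nonneg a hh
  · have := softplus_sub_ge_of_nonneg (-a) (neg_nonneg.2 hh)
    rw [← neg_add, softplus_neg, softplus_neg, sigmoid_neg] at this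
    rw [abs_of_nonpos hh]
    linarith

lemma sq_sum_mul_le_of_abs_le {p : ℕ} {g : Fin p → ℝ} {M : ℝ} (hg : ∀ j, |g j| ≤ M)
    (δ : Fin p → ℝ) :
    (∑ j, g j * δ j) ^ 2 ≤ M ^ 2 * (supp δ).card * ∑ j, δ j ^ 2 := by
  have hsupp : ∑ j ∈ supp δ, g j * δ j = ∑ j, g j * δ j :=
    sum_filter_of_ne fun j _ h => right_ne_zero_of_mul h
  calc (∑ j, g j * δ j) ^ 2 = (∑ j ∈ supp δ, g j * δ j) ^ 2 := by rw [hsupp]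
    _ ≤ (∑ j ∈ supp δ, g j ^ 2) * ∑ j ∈ supp δ, δ j ^ 2 := sum_mul_sq_le_sq_mul_sq _ _ _
    _ ≤ ((supp δ).card • M ^ 2) * ∑ j, δ j ^ 2 :=
        mul_le_mul
          (sum_le_card_nsmul _ _ _ fun j _ => sq_le_sq' (abs_le.1 (hg j)).1 (abs_le.1 (hg j)).2)
          (sum_le_sum_of_subset_of_nonneg (subset_univ _) fun j _ _ => sq_nonneg _)
          (sum_nonneg fun j _ => sq_nonneg _) (by positivity)
    _ = M ^ 2 * (supp δ).card * ∑ j, δ j ^ 2 := by rw [nsmul_eq_mul]; ring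

lemma card_supp_smul_sub_le {p : ℕ} {T : Finset (Fin p)} {η η' : Fin p → ℝ}
    (hη' : ∀ j, j ∉ T → η' j = 0) (c : ℝ) :
    (supp (c • (η' - η))).card ≤ T.card + (supp η).card := by
  refine (card_le_card fun j hj => ?_).trans (card_union_le _ _)
  by_contra hjT
  simp only [supp, mem_union, mem_filter, mem_univ, true_and, not_or, not_not] at hj hjT
  simp [hη' j hjT.1, hjT.2] at hj

lemma rpow_three_div_two_eq_sqrt_pow {a : ℝ} (ha : 0 ≤ a) : a ^ ((3 : ℝ) / 2) = √a ^ 3 := by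
  rw [Real.sqrt_eq_rpow, ← Real.rpow_natCast, ← Real.rpow_mul ha]
  norm_num

section LogisticLoss

variable {n p : ℕ} (x : Fin n → Fin p → ℝ) (y : Fin n → ℝ)

lemma xdot_add (η δ : Fin p → ℝ) (i : Fin n) : xdot x (η + δ) i = xdot x η i + xdot x δ i :=
  congrFun (Matrix.mulVec_add x η δ) i

lemma xdot_smul (c : ℝ) (δ : Fin p → ℝ) (i : Fin n) : xdot x (c • δ) i = c * xdot x δ i :=
  congrFun (Matrix.mulVec_smul x c δ) i

lemma wgt_nonneg (η : Fin p → ℝ) (i : Fin n) : 0 ≤ wgt x η i := by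
  rw [wgt, logistic_eq_sigmoid]
  exact mul_nonneg (sigmoid_nonneg _) (sub_nonneg.2 (sigmoid_le_one _))

lemma sum_gradLam_mul (η δ : Fin p → ℝ) :
    ∑ j, gradLam x y η j * δ j = 1 / (n : ℝ) * ∑ i, (sigmoid (xdot x η i) - y i) * xdot x δ i := by
  simp only [gradLam, xdot, ← logistic_eq_sigmoid, mul_sum, sum_mul]
  rw [sum_comm]
  exact sum_congr rfl fun i _ => sum_congr rfl fun j _ => by ring

lemma Lam_add_sub_ge (η δ : Fin p → ℝ) :
    ∑ j, gradLam x y η j * δ j + (1 / (n : ℝ) * ∑ i, wgt x η i * xdot x δ i ^ 2) / 2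
        - (1 / (n : ℝ) * ∑ i, wgt x η i * |xdot x δ i| ^ 3) / 6
      ≤ Lam x y (η + δ) - Lam x y η := by
  calc _ = 1 / (n : ℝ) * ∑ i, ((sigmoid (xdot x η i) - y i) * xdot x δ i
          + wgt x η i * (xdot x δ i ^ 2 / 2 - |xdot x δ i| ^ 3 / 6)) := by
        rw [sum_gradLam_mul]
        simp only [mul_sum, sum_div, ← sum_add_distrib, ← sum_sub_distrib]
        exact sum_congr rfl fun i _ => by ring
    _ ≤ 1 / (n : ℝ) * ∑ i, (softplus (xdot x η i + xdot x δ i) - y i * (xdot x η i + xdot x δ i)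
          - (softplus (xdot x η i) - y i * xdot x η i)) := by
        gcongr with i
        have := softplus_sub_ge (xdot x η i) (xdot x δ i)
        rw [wgt, logistic_eq_sigmoid]
        linarith
    _ = Lam x y (η + δ) - Lam x y η := by
        simp only [Lam, softplus, xdot_add, ← mul_sub, ← sum_sub_distrib]

lemma convexOn_Lam : ConvexOn ℝ Set.univ (Lam x y) := by
  refine ⟨convex_univ, fun η _ η' _ a b ha hb hab => ?_⟩
  have hsoft (i : Fin n) := convexOn_softplus.2 (Set.mem_univ (xdot x η i))
    (Set.mem_univ (xdot x η' i)) ha hb hab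
  simp only [smul_eq_mul] at hsoft ⊢
  calc Lam x y (a • η + b • η')
      = 1 / (n : ℝ) * ∑ i, (softplus (a * xdot x η i + b * xdot x η' i)
          - y i * (a * xdot x η i + b * xdot x η' i)) := by
        simp only [Lam, softplus, xdot_add, xdot_smul]
    _ ≤ 1 / (n : ℝ) * ∑ i, (a * (softplus (xdot x η i) - y i * xdot x η i)
          + b * (softplus (xdot x η' i) - y i * xdot x η' i)) := by
        gcongr with i
        linarith [hsoft i]
    _ = a * Lam x y η + b * Lam x y η' := by
        simp only [Lam, softplus, sum_add_distrib, ← mul_sum]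
        ring

lemma Lam_add_smul_sub_le (η η' : Fin p → ℝ) {c : ℝ} (hc : c ∈ Set.Icc (0 : ℝ) 1) :
    Lam x y (η + c • (η' - η)) - Lam x y η ≤ c * (Lam x y η' - Lam x y η) := by
  have h := (convexOn_Lam x y).2 (Set.mem_univ η) (Set.mem_univ η') (sub_nonneg.2 hc.2) hc.1
    (sub_add_cancel 1 c)
  rw [show (1 - c) • η + c • η' = η + c • (η' - η) by
    rw [smul_sub, sub_smul, one_smul]; abel] at h
  simp only [smul_eq_mul] at h
  linarith

lemma predNorm_sq (w : Fin n → ℝ) (hw : ∀ i, 0 ≤ w i) (δ : Fin p → ℝ) :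
    predNorm x w δ ^ 2 = 1 / (n : ℝ) * ∑ i, w i * xdot x δ i ^ 2 :=
  Real.sq_sqrt (mul_nonneg (by positivity) (sum_nonneg fun i _ => mul_nonneg (hw i) (sq_nonneg _)))

lemma predNorm_smul (w : Fin n → ℝ) (c : ℝ) (δ : Fin p → ℝ) :
    predNorm x w (c • δ) = |c| * predNorm x w δ := by
  simp only [predNorm, xdot_smul, mul_pow, mul_left_comm (w _), ← mul_sum, mul_left_comm _ (c ^ 2)]
  rw [Real.sqrt_mul (sq_nonneg c), Real.sqrt_sq_eq_abs]

lemma abs_gradLam_le_gradLamSup (η : Fin p → ℝ) (j : Fin p) :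
    |gradLam x y η j| ≤ gradLamSup x y η :=
  le_ciSup (f := fun j => |gradLam x y η j|) (Set.finite_range _).bddAbove j

lemma gradLamSup_nonneg (η : Fin p → ℝ) : 0 ≤ gradLamSup x y η :=
  Real.iSup_nonneg fun _ => abs_nonneg _

end LogisticLoss

lemma Lam_add_sub_ge_of_sparse {n p : ℕ} (x : Fin n → Fin p → ℝ) (y : Fin n → ℝ)
    {η δ : Fin p → ℝ} {φ q k : ℝ} (hφ : 0 < φ) (hq : 0 < q) (hk : ((supp δ).card : ℝ) ≤ k)
    (hSE : φ * ∑ j, δ j ^ 2 ≤ predNorm x (wgt x η) δ ^ 2)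
    (hcube : q * (1 / (n : ℝ) * ∑ i, wgt x η i * |xdot x δ i| ^ 3)
      ≤ (1 / (n : ℝ) * ∑ i, wgt x η i * xdot x δ i ^ 2) ^ ((3 : ℝ) / 2)) :
    -(√k * gradLamSup x y η / √φ * predNorm x (wgt x η) δ) + predNorm x (wgt x η) δ ^ 2 / 2
        - predNorm x (wgt x η) δ ^ 3 / (6 * q)
      ≤ Lam x y (η + δ) - Lam x y η := by
  set u := predNorm x (wgt x η) δ
  set M := gradLamSup x y η
  have hu : 0 ≤ u := Real.sqrt_nonneg _
  have hk0 : 0 ≤ k := (Nat.cast_nonneg _).trans hk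
  have hS2 : 1 / (n : ℝ) * ∑ i, wgt x η i * xdot x δ i ^ 2 = u ^ 2 :=
    (predNorm_sq x _ (wgt_nonneg x η) δ).symm
  have hR3 : 1 / (n : ℝ) * ∑ i, wgt x η i * |xdot x δ i| ^ 3 ≤ u ^ 3 / q := by
    rw [le_div_iff₀' hq]
    rwa [rpow_three_div_two_eq_sqrt_pow (hS2 ▸ sq_nonneg u)] at hcube
  have hgrad : -(√k * M / √φ * u) ≤ ∑ j, gradLam x y η j * δ j := by
    have hδ : ∑ j, δ j ^ 2 ≤ u ^ 2 / φ := by rwa [le_div_iff₀' hφ]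
    refine (abs_le_of_sq_le_sq' ?_ (by have := gradLamSup_nonneg x y η; positivity)).1
    calc (∑ j, gradLam x y η j * δ j) ^ 2
        ≤ M ^ 2 * (supp δ).card * ∑ j, δ j ^ 2 :=
          sq_sum_mul_le_of_abs_le (abs_gradLam_le_gradLamSup x y η) δ
      _ ≤ M ^ 2 * k * (u ^ 2 / φ) := by gcongr
      _ = (√k * M / √φ * u) ^ 2 := by
          rw [mul_pow, div_pow, mul_pow, Real.sq_sqrt hk0, Real.sq_sqrt hφ.le]; ring
  have := Lam_add_sub_ge x y η δ
  rw [hS2] at this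
  have hR3' : u ^ 3 / (6 * q) = u ^ 3 / q / 6 := by ring
  linarith

lemma le_of_forall_cubic_le {t A ε q : ℝ} (hA : 0 ≤ A) (hε : 0 ≤ ε) (hAq : 6 * A < q)
    (hεq : 6 * ε < q)
    (h : ∀ c ∈ Set.Icc (0 : ℝ) 1,
      -(A * (c * t)) + (c * t) ^ 2 / 2 - (c * t) ^ 3 / (6 * q) ≤ ε ^ 2) :
    t ≤ √3 * ε + 3 * A := by
  by_contra! ht
  have hq : 0 < q := by linarith
  have ht0 : 0 < t := lt_of_le_of_lt (by positivity) ht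
  have hsqrt3 : √3 < 9 / 5 := by rw [Real.sqrt_lt' (by norm_num)]; norm_num
  have hBq : √3 * ε + 3 * A < 4 / 5 * q := by nlinarith [Real.sqrt_nonneg 3]
  set u := min t (4 / 5 * q)
  have hc : min 1 (4 / 5 * q / t) ∈ Set.Icc (0 : ℝ) 1 :=
    ⟨le_min zero_le_one (by positivity), min_le_left _ _⟩
  have hct : min 1 (4 / 5 * q / t) * t = u := by
    rw [min_mul_of_nonneg _ _ ht0.le, one_mul, div_mul_cancel₀ _ ht0.ne']
  have hu := h _ hc
  rw [hct] at hu
  have huB : √3 * ε + 3 * A < u := lt_min ht hBq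
  have hu0 : 0 < u := lt_of_le_of_lt (by positivity) huB
  have hcube : u ^ 3 / (6 * q) ≤ 2 / 15 * u ^ 2 := by
    rw [div_le_iff₀ (by positivity)]
    nlinarith [mul_le_mul_of_nonneg_right (min_le_right t (4 / 5 * q)) (sq_nonneg u)]
  have hAu : 3 * A * u < (u - √3 * ε) * u := by nlinarith
  have hεu : 3 * ε ^ 2 ≤ √3 * ε * u :=
    calc 3 * ε ^ 2 = √3 * ε * (√3 * ε) := by
          rw [mul_mul_mul_comm, Real.mul_self_sqrt (by norm_num)]; ring
      _ ≤ √3 * ε * u := by gcongr; linarith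
  nlinarith

theorem post_selection_logistic_rate_general {n p : ℕ}
    (x : Fin n → Fin p → ℝ) (y : Fin n → ℝ)
    (η₀ : Fin p → ℝ)
    (That : Finset (Fin p))
    (ηtil : Fin p → ℝ) (hsupp : ∀ j, j ∉ That → ηtil j = 0)
    (φ : ℝ) (hφ : 0 < φ)
    (hSE : ∀ δ : Fin p → ℝ, (supp δ).card ≤ That.card + (supp η₀).card →
      φ * ∑ j, δ j ^ 2 ≤ predNorm x (wgt x η₀) δ ^ 2)
    (qbar : ℝ)
    (hq : ∀ δ : Fin p → ℝ, (supp δ).card ≤ That.card + (supp η₀).card →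
      qbar * ((1 / (n : ℝ)) * ∑ i, wgt x η₀ i * |xdot x δ i| ^ 3)
        ≤ ((1 / (n : ℝ)) * ∑ i, wgt x η₀ i * xdot x δ i ^ 2) ^ ((3 : ℝ) / 2))
    (ε : ℝ) (hε : 0 ≤ ε)
    (hLam : Lam x y ηtil - Lam x y η₀ ≤ ε ^ 2)
    (hq1 : 6 * Real.sqrt ((That.card : ℝ) + (supp η₀).card) * gradLamSup x y η₀
        / Real.sqrt φ < qbar)
    (hq2 : 6 * ε < qbar) :
    predNorm x (wgt x η₀) (ηtil - η₀)
      ≤ Real.sqrt 3 * ε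
        + 3 * Real.sqrt ((That.card : ℝ) + (supp η₀).card) * gradLamSup x y η₀
            / Real.sqrt φ := by
  have hM := gradLamSup_nonneg x y η₀
  set A := √((That.card : ℝ) + (supp η₀).card) * gradLamSup x y η₀ / √φ with hA
  have h6A : 6 * A < qbar := by rwa [hA, ← mul_div_assoc, ← mul_assoc]
  suffices predNorm x (wgt x η₀) (ηtil - η₀) ≤ √3 * ε + 3 * A by
    rwa [hA, ← mul_div_assoc, ← mul_assoc] at this
  refine le_of_forall_cubic_le (by positivity) hε h6A hq2 fun c hc => ?_
  have hcard := card_supp_smul_sub_le (η := η₀) hsupp c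
  have hnorm : predNorm x (wgt x η₀) (c • (ηtil - η₀)) = c * predNorm x (wgt x η₀) (ηtil - η₀) := by
    rw [predNorm_smul, abs_of_nonneg hc.1]
  rw [← hnorm]
  calc _ ≤ Lam x y (η₀ + c • (ηtil - η₀)) - Lam x y η₀ :=
        Lam_add_sub_ge_of_sparse x y hφ (by linarith) (by exact_mod_cast hcard)
          (hSE _ hcard) (hq _ hcard)
    _ ≤ c * (Lam x y ηtil - Lam x y η₀) := Lam_add_smul_sub_le x y η₀ ηtil hc
    _ ≤ ε ^ 2 := by
        rcases le_total (Lam x y ηtil - Lam x y η₀) 0 with hD | hD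
        · nlinarith [mul_nonpos_of_nonneg_of_nonpos hc.1 hD]
        · exact (mul_le_of_le_one_left hD hc.2).trans hLam

/-- Rate of convergence of the post-model-selection logistic regression estimator
(Lemma B.7): if `η̃` is supported on `T̂*` with `ŝ* = |T̂*|`, `φ` is a minimal sparse
eigenvalue and `q̄` a nonlinear impact coefficient at sparsity `ŝ* + s`,
`Λ(η̃) − Λ(η₀) ≤ ε²`, `q̄ > 6√(ŝ*+s)‖∇Λ(η₀)‖_∞/√φ`, and `q̄ > 6ε`, then
`‖√w_i x_i'(η̃−η₀)‖_{2,n} ≤ √3·ε + 3√(ŝ*+s)‖∇Λ(η₀)‖_∞/√φ`. -/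
theorem post_selection_logistic_rate {n p : ℕ} (hn : 0 < n) (hp : 0 < p)
    (x : Fin n → Fin p → ℝ) (y : Fin n → ℝ) (hy : ∀ i, y i = 0 ∨ y i = 1)
    (η₀ : Fin p → ℝ) (hs : 1 ≤ (supp η₀).card)
    (That : Finset (Fin p))
    (ηtil : Fin p → ℝ) (hsupp : ∀ j, j ∉ That → ηtil j = 0)
    (φ : ℝ) (hφ : 0 < φ)
    (hSE : ∀ δ : Fin p → ℝ, (supp δ).card ≤ That.card + (supp η₀).card →
      φ * ∑ j, δ j ^ 2 ≤ predNorm x (wgt x η₀) δ ^ 2)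
    (qbar : ℝ) (hqbar : 0 < qbar)
    (hq : ∀ δ : Fin p → ℝ, (supp δ).card ≤ That.card + (supp η₀).card →
      qbar * ((1 / (n : ℝ)) * ∑ i, wgt x η₀ i * |xdot x δ i| ^ 3)
        ≤ ((1 / (n : ℝ)) * ∑ i, wgt x η₀ i * xdot x δ i ^ 2) ^ ((3 : ℝ) / 2))
    (ε : ℝ) (hε : 0 ≤ ε)
    (hLam : Lam x y ηtil - Lam x y η₀ ≤ ε ^ 2)
    (hq1 : 6 * Real.sqrt ((That.card : ℝ) + (supp η₀).card) * gradLamSup x y η₀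
        / Real.sqrt φ < qbar)
    (hq2 : 6 * ε < qbar) :
    predNorm x (wgt x η₀) (ηtil - η₀)
      ≤ Real.sqrt 3 * ε
        + 3 * Real.sqrt ((That.card : ℝ) + (supp η₀).card) * gradLamSup x y η₀
            / Real.sqrt φ :=
  post_selection_logistic_rate_general x y η₀ That ηtil hsupp φ hφ hSE qbar hq ε hε hLam hq1 hq2
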